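/- arXiv:1206.6162 — 3 statements merged into one kernel-verified Lean document; each statement's English description precedes it below -/
import Mathlib

section
/- The characteristic polynomial of the matrix J·B equals λ⁴ + λ² + β/4, where J is the standard 4×4 symplectic matrix and B is the constant coefficient matrix of the linearized system at eccentricity e = 0. -/
open Polynomial Matrix

set_option maxHeartbeats 1600000 in
/-- The characteristic polynomial of J·B equals λ⁴ + λ² + β/4, where J is the standard
4×4 symplectic matrix and B is the constant coefficient matrix at eccentricity e = 0. -/
theorem charpoly_JB (β : ℝ) (hβ : β ∈ Set.Icc (0 : ℝ) 9) :
    (((!![0, 0, -1, 0; 0, 0, 0, -1; 1, 0, 0, 0; 0, 1, 0, 0] : Matrix (Fin 4) (Fin 4) ℝ) *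
        (!![1, 0, 0, 1; 0, 1, -1, 0; 0, -1, -(Real.sqrt (9 - β) + 1) / 2, 0;
            1, 0, 0, (Real.sqrt (9 - β) - 1) / 2] : Matrix (Fin 4) (Fin 4) ℝ)).charpoly)
      = X ^ 4 + X ^ 2 + C (β / 4) := by
  have hs : Real.sqrt (9 - β) * Real.sqrt (9 - β) = 9 - β :=
    Real.mul_self_sqrt (by linarith [hβ.2])
  rw [Matrix.charpoly]
  simp [Matrix.det_succ_row_zero, Fin.sum_univ_succ, charmatrix, Matrix.mul_apply,
    Matrix.one_apply, Fin.succAbove, Matrix.diagonal_apply]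
  ring_nf
  have e2 : (C (-1 / 2 + Real.sqrt (9 - β) * (1 / 2)) : ℝ[X]) +
      C (-1 / 2 + Real.sqrt (9 - β) * (-1 / 2)) = -1 := by
    rw [← C_add, show (-1 : ℝ[X]) = C (-1) by simp, ]
    congr 1; ring
  have e1 : (C (-1 / 2 + Real.sqrt (9 - β) * (1 / 2)) : ℝ[X]) *
      C (-1 / 2 + Real.sqrt (9 - β) * (-1 / 2)) = C (β * (1/4)) - 2 := by
    rw [← C_mul, show (2 : ℝ[X]) = C 2 from (map_ofNat C 2).symm, ← C_sub]
    congr 1; nlinarith [hs]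
  linear_combination (X^2 - 1 : ℝ[X]) * e2 + e1
end

section
/- The explicit matrix path γ(t) with entries γ(t) = [[2-cos t, 3t-2sin t, 3t-sin t, 1-cos t], [-sin t, 2cos t - 1, cos t - 1, -sin t], [sin t, 2-2cos t, 2-cos t, sin t], [2cos t - 2, 4sin t - 3t, 2sin t - 3t, 2cos t - 1]] satisfies γ(0) = I₄ and γ'(t) = J·B·γ(t), where B is the matrix with rows (1,0,0,1), (0,1,-1,0), (0,-1,-2,0), (1,0,0,1). -/
open Matrix Real

/-- The standard 4×4 symplectic matrix J. -/
noncomputable def Jmat : Matrix (Fin 4) (Fin 4) ℝ :=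
  !![0, 0, -1, 0; 0, 0, 0, -1; 1, 0, 0, 0; 0, 1, 0, 0]

/-- The constant coefficient matrix B at β = 0, e = 0. -/
noncomputable def Bmat : Matrix (Fin 4) (Fin 4) ℝ :=
  !![1, 0, 0, 1; 0, 1, -1, 0; 0, -1, -2, 0; 1, 0, 0, 1]

/-- The explicit fundamental solution γ_{0,0}(t). -/
noncomputable def gamma00 (t : ℝ) : Matrix (Fin 4) (Fin 4) ℝ :=
  !![2 - cos t, 3 * t - 2 * sin t, 3 * t - sin t, 1 - cos t;
     -sin t, 2 * cos t - 1, cos t - 1, -sin t;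
     sin t, 2 - 2 * cos t, 2 - cos t, sin t;
     2 * cos t - 2, 4 * sin t - 3 * t, 2 * sin t - 3 * t, 2 * cos t - 1]

/-- γ_{0,0} satisfies γ(0) = I₄ and γ'(t) = J·B·γ(t). -/
theorem gamma00_fundamental_solution :
    gamma00 0 = 1 ∧
    ∀ (t : ℝ) (i j : Fin 4),
      HasDerivAt (fun s => gamma00 s i j) ((Jmat * Bmat * gamma00 t) i j) t := by
  constructor
  · ext i j
    fin_cases i <;> fin_cases j <;> simp [gamma00, Matrix.one_apply] <;> norm_num [Matrix.vecHead, Matrix.vecTail]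
  · intro t i j
    fin_cases i <;> fin_cases j <;>
      simp [gamma00, Jmat, Bmat, Matrix.mul_apply, Fin.sum_univ_four]
    · exact HasDerivAt.congr_deriv ((Real.hasDerivAt_cos t).const_sub 2) (by ring)
    · exact HasDerivAt.congr_deriv (((hasDerivAt_id t).const_mul 3).sub ((Real.hasDerivAt_sin t).const_mul 2)) (by ring)
    · exact HasDerivAt.congr_deriv (((hasDerivAt_id t).const_mul 3).sub (Real.hasDerivAt_sin t)) (by ring)
    · exact HasDerivAt.congr_deriv ((Real.hasDerivAt_cos t).const_sub 1) (by ring)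
    · exact HasDerivAt.congr_deriv ((Real.hasDerivAt_sin t).neg) (by ring)
    · exact HasDerivAt.congr_deriv ((Real.hasDerivAt_cos t).const_mul 2) (by ring)
    · exact HasDerivAt.congr_deriv (Real.hasDerivAt_cos t) (by ring)
    · exact HasDerivAt.congr_deriv ((Real.hasDerivAt_sin t).neg) (by ring)
    · exact HasDerivAt.congr_deriv (Real.hasDerivAt_sin t) (by ring)
    · exact HasDerivAt.congr_deriv (((Real.hasDerivAt_cos t).const_mul 2).const_sub 2) (by ring)
    · exact HasDerivAt.congr_deriv ((Real.hasDerivAt_cos t).const_sub 2) (by ring)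
    · exact HasDerivAt.congr_deriv (Real.hasDerivAt_sin t) (by ring)
    · exact HasDerivAt.congr_deriv ((Real.hasDerivAt_cos t).const_mul 2) (by ring)
    · exact HasDerivAt.congr_deriv (((Real.hasDerivAt_sin t).const_mul 4).sub ((hasDerivAt_id t).const_mul 3)) (by ring)
    · exact HasDerivAt.congr_deriv (((Real.hasDerivAt_sin t).const_mul 2).sub ((hasDerivAt_id t).const_mul 3)) (by ring)
    · exact HasDerivAt.congr_deriv ((Real.hasDerivAt_cos t).const_mul 2) (by ring)
end

section
/- Let A₁(e) = -d²/dt² - 1 + 3/(2(1+e cos t)) acting on 2π-periodic functions, with 0 ≤ e < 1. Then ker A₁(e) = {0}; i.e., if x is 2π-periodic, twice weakly differentiable, and satisfies -x''(t) - x(t) + 3x(t)/(2(1+e cos t)) = 0 for all t, then x ≡ 0. -/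
open MeasureTheory intervalIntegral Real Set ComplexConjugate

lemma two_pi_pos' : (0:ℝ) < 2 * Real.pi := Real.two_pi_pos

lemma parseval_aux (x : ℝ → ℂ) (hx : Continuous x) (hp : x 0 = x (2 * Real.pi)) :
    Summable (fun n : ℤ => ‖fourierCoeffOn two_pi_pos' x n‖ ^ 2) ∧
      (2 * Real.pi) * ∑' n : ℤ, ‖fourierCoeffOn two_pi_pos' x n‖ ^ 2
        = ∫ t in (0:ℝ)..(2 * Real.pi), ‖x t‖ ^ 2 := by
  haveI : Fact ((0:ℝ) < 2 * Real.pi) := ⟨two_pi_pos'⟩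
  set T : ℝ := 2 * Real.pi with hT
  have hF0cont : Continuous (AddCircle.liftIco T 0 x) :=
    AddCircle.liftIco_zero_continuous hp hx.continuousOn
  set F : C(AddCircle T, ℂ) := ⟨AddCircle.liftIco T 0 x, hF0cont⟩ with hF
  set fLp := ContinuousMap.toLp (E := ℂ) 2 (AddCircle.haarAddCircle) ℂ F with hfLp
  have hFx : ∀ t ∈ Icc (0:ℝ) T, F (t : AddCircle T) = x t := by
    intro t ht
    rcases eq_or_lt_of_le ht.2 with h | h
    · have hcoe : ((t : ℝ) : AddCircle T) = ((0:ℝ) : AddCircle T) := by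
        rw [h]; simpa using AddCircle.coe_add_period T 0
      show AddCircle.liftIco T 0 x (t : AddCircle T) = x t
      rw [hcoe, AddCircle.liftIco_coe_apply (by simp [Fact.out (p := (0:ℝ) < T)] : (0:ℝ) ∈ Ico 0 (0+T)), h]
      exact hp
    · show AddCircle.liftIco T 0 x (t : AddCircle T) = x t
      exact AddCircle.liftIco_coe_apply (by simpa using ⟨ht.1, h⟩)
  have hcoeff : ∀ n : ℤ, fourierCoeff (fLp : AddCircle T → ℂ) n = fourierCoeffOn two_pi_pos' x n := by
    intro n
    rw [fourierCoeff_toLp]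
    have h2 := fourierCoeff_liftIco_eq (T := T) (a := 0) x n
    simp only [zero_add] at h2
    exact h2
  have hsum : Summable (fun n : ℤ => ‖fourierCoeffOn two_pi_pos' x n‖ ^ 2) := by
    have hmem := lp.memℓp (fourierBasis.repr fLp)
    have hs := hmem.summable (by norm_num : (0:ℝ) < (2 : ENNReal).toReal)
    refine hs.congr fun n => ?_
    rw [fourierBasis_repr, hcoeff n]
    norm_num [Real.rpow_natCast]
  refine ⟨hsum, ?_⟩
  have hpars := tsum_sq_fourierCoeff fLp
  simp_rw [hcoeff] at hpars
  rw [hpars]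
  have hae : (fLp : AddCircle T → ℂ) =ᵐ[AddCircle.haarAddCircle] F :=
    ContinuousMap.coeFn_toLp (E := ℂ) AddCircle.haarAddCircle (𝕜 := ℂ) F
  have h1 : ∫ t : AddCircle T, ‖(fLp : AddCircle T → ℂ) t‖ ^ 2 ∂AddCircle.haarAddCircle
      = ∫ t : AddCircle T, ‖F t‖ ^ 2 ∂AddCircle.haarAddCircle := by
    refine integral_congr_ae ?_
    filter_upwards [hae] with t ht using by rw [ht]
  rw [h1]
  have h2 : ∫ t : AddCircle T, ‖F t‖ ^ 2 ∂(volume : Measure (AddCircle T))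
      = T * ∫ t : AddCircle T, ‖F t‖ ^ 2 ∂AddCircle.haarAddCircle := by
    rw [AddCircle.volume_eq_smul_haarAddCircle, MeasureTheory.integral_smul_measure,
      ENNReal.toReal_ofReal (le_of_lt (Fact.out : (0:ℝ) < T)), smul_eq_mul]
  have h3 : ∫ t : AddCircle T, ‖F t‖ ^ 2 ∂(volume : Measure (AddCircle T))
      = ∫ t in (0:ℝ)..(0 + T), ‖F (t : AddCircle T)‖ ^ 2 :=
    (AddCircle.intervalIntegral_preimage T 0 (fun z => ‖F z‖ ^ 2)).symm
  rw [← h2, h3]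
  rw [zero_add]
  refine intervalIntegral.integral_congr fun t ht => ?_
  rw [uIcc_of_le (le_of_lt (Fact.out : (0:ℝ) < T))] at ht
  rw [hFx t ht]


/-- The operator A₁(e) = -d²/dt² - 1 + 3/(2(1+e cos t)) on 2π-periodic functions has
trivial kernel for 0 ≤ e < 1. -/
theorem A1_trivial_kernel (e : ℝ) (he0 : 0 ≤ e) (he1 : e < 1)
    (x x' x'' : ℝ → ℂ)
    (hper : ∀ t, x (t + 2 * Real.pi) = x t)
    (hd1 : ∀ t, HasDerivAt x (x' t) t)
    (hd2 : ∀ t, HasDerivAt x' (x'' t) t)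
    (heq : ∀ t, -x'' t - x t + 3 * x t / (2 * (1 + e * Real.cos t)) = 0) :
    ∀ t, x t = 0 := by
  have hπ : (0:ℝ) < 2 * Real.pi := Real.two_pi_pos
  haveI : Fact ((0:ℝ) < 2 * Real.pi) := ⟨hπ⟩
  have hxc : Continuous x := continuous_iff_continuousAt.mpr fun t => (hd1 t).continuousAt
  have hx'c : Continuous x' := continuous_iff_continuousAt.mpr fun t => (hd2 t).continuousAt
  have hwpos : ∀ t : ℝ, 0 < 1 + e * Real.cos t := fun t => by
    nlinarith [Real.neg_one_le_cos t, Real.cos_le_one t]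
  have hwne : ∀ t : ℝ, (2 * (1 + (e:ℂ) * (Real.cos t : ℂ))) ≠ 0 := fun t => by
    have h := (hwpos t).ne'
    intro hcon
    apply h
    have : ((1 + e * Real.cos t : ℝ) : ℂ) = 0 := by
      push_cast
      simpa using mul_eq_zero.mp hcon |>.resolve_left (by norm_num)
    exact_mod_cast this
  -- pointwise zero of integrand of pairing
  have hzero : ∀ t, conj (x t) * (-x'' t - x t + 3 * x t / (2 * (1 + e * Real.cos t))) = 0 :=
    fun t => by rw [heq t, mul_zero]
  have hx''eq : ∀ t, x'' t = 3 * x t / (2 * (1 + (e:ℂ) * Real.cos t)) - x t := fun t => by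
    have h := heq t
    linear_combination -h
  have hx''c : Continuous x'' := by
    have : x'' = fun t => 3 * x t / (2 * (1 + (e:ℂ) * Real.cos t)) - x t := funext hx''eq
    rw [this]
    exact ((continuous_const.mul hxc).div
      (continuous_const.mul (continuous_const.add (continuous_const.mul
        (Complex.continuous_ofReal.comp Real.continuous_cos)))) hwne).sub hxc
  have hx'per : ∀ t, x' (t + 2 * Real.pi) = x' t := by
    intro t
    have hshift : HasDerivAt (fun s : ℝ => s + 2 * Real.pi) 1 t := by
      simpa using (hasDerivAt_id t).add_const (2 * Real.pi)
    have h1 : HasDerivAt (fun s => x (s + 2 * Real.pi)) (x' (t + 2 * Real.pi)) t := by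
      have h1' := (hd1 (t + 2 * Real.pi)).scomp t hshift
      rw [one_smul] at h1'
      exact h1'
    have h2 : HasDerivAt (fun s => x (s + 2 * Real.pi)) (x' t) t := by
      have hfx : (fun s => x (s + 2 * Real.pi)) = x := funext hper
      rw [hfx]; exact hd1 t
    exact h1.unique h2
  have hxp0 : x 0 = x (2 * Real.pi) := by
    have := hper 0; rw [zero_add] at this; exact this.symm
  have hx'p0 : x' 0 = x' (2 * Real.pi) := by
    have := hx'per 0; rw [zero_add] at this; exact this.symm
  -- FTC facts
  have hIx'' : (∫ t in (0:ℝ)..(2*Real.pi), x'' t) = 0 := by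
    rw [intervalIntegral.integral_eq_sub_of_hasDerivAt (fun t _ => hd2 t)
      (hx''c.intervalIntegrable _ _), ← hx'p0, sub_self]
  have hIx' : (∫ t in (0:ℝ)..(2*Real.pi), x' t) = 0 := by
    rw [intervalIntegral.integral_eq_sub_of_hasDerivAt (fun t _ => hd1 t)
      (hx'c.intervalIntegrable _ _), ← hxp0, sub_self]
  have hcosC : Continuous fun t : ℝ => ((Real.cos t : ℝ) : ℂ) :=
    Complex.continuous_ofReal.comp Real.continuous_cos
  have hsinC : Continuous fun t : ℝ => ((Real.sin t : ℝ) : ℂ) :=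
    Complex.continuous_ofReal.comp Real.continuous_sin
  have hIsinx' : (∫ t in (0:ℝ)..(2*Real.pi), (Real.sin t : ℂ) * x' t)
      = - ∫ t in (0:ℝ)..(2*Real.pi), (Real.cos t : ℂ) * x t := by
    rw [intervalIntegral.integral_mul_deriv_eq_deriv_mul
      (u := fun t => ((Real.sin t : ℝ) : ℂ)) (u' := fun t => ((Real.cos t : ℝ) : ℂ))
      (v := x) (v' := x')
      (fun t _ => (Real.hasDerivAt_sin t).ofReal_comp)
      (fun t _ => hd1 t)
      (hcosC.intervalIntegrable _ _) (hx'c.intervalIntegrable _ _)]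
    simp [Real.sin_two_pi]
  have hIcosx'' : (∫ t in (0:ℝ)..(2*Real.pi), (Real.cos t : ℂ) * x'' t)
      = - ∫ t in (0:ℝ)..(2*Real.pi), (Real.cos t : ℂ) * x t := by
    rw [intervalIntegral.integral_mul_deriv_eq_deriv_mul
      (u := fun t => ((Real.cos t : ℝ) : ℂ)) (u' := fun t => (-(Real.sin t : ℝ) : ℂ))
      (v := x') (v' := x'')
      (fun t _ => by simpa using (Real.hasDerivAt_cos t).ofReal_comp)
      (fun t _ => hd2 t)
      ((hsinC.neg.congr (by intro t; push_cast; rfl)).intervalIntegrable _ _)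
      (hx''c.intervalIntegrable _ _)]
    have : (∫ t in (0:ℝ)..(2*Real.pi), (-(Real.sin t : ℝ) : ℂ) * x' t)
        = - ∫ t in (0:ℝ)..(2*Real.pi), (Real.sin t : ℂ) * x' t := by
      rw [← intervalIntegral.integral_neg]
      apply intervalIntegral.integral_congr
      intro t _
      push_cast
      ring
    rw [this, hIsinx', Real.cos_two_pi, ← hx'p0]
    simp
  -- mean zero
  have hkey : ∀ t, x'' t + (e:ℂ) * ((Real.cos t : ℝ) : ℂ) * x'' t + (e:ℂ) * ((Real.cos t : ℝ) : ℂ) * x t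
      = (1/2 : ℂ) * x t := by
    intro t
    have h := hx''eq t
    have hne := hwne t
    have h' := congrArg (· * (2 * (1 + (e:ℂ) * ((Real.cos t : ℝ) : ℂ)))) h
    simp only [sub_mul, div_mul_cancel₀ _ hne] at h'
    linear_combination (1/2 : ℂ) * h'
  have hmean : (∫ t in (0:ℝ)..(2*Real.pi), x t) = 0 := by
    have hL : (∫ t in (0:ℝ)..(2*Real.pi),
        (x'' t + (e:ℂ) * ((Real.cos t : ℝ) : ℂ) * x'' t + (e:ℂ) * ((Real.cos t : ℝ) : ℂ) * x t))
        = ∫ t in (0:ℝ)..(2*Real.pi), (1/2 : ℂ) * x t :=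
      intervalIntegral.integral_congr fun t _ => hkey t
    rw [intervalIntegral.integral_add (f := fun t => x'' t + (e:ℂ) * ((Real.cos t : ℝ) : ℂ) * x'' t)
        (g := fun t => (e:ℂ) * ((Real.cos t : ℝ) : ℂ) * x t) (((hx''c.intervalIntegrable _ _).add
        (((continuous_const.mul hcosC).mul hx''c).intervalIntegrable _ _)))
        (((continuous_const.mul hcosC).mul hxc).intervalIntegrable _ _),
      intervalIntegral.integral_add (f := fun t => x'' t) (g := fun t => (e:ℂ) * ((Real.cos t : ℝ) : ℂ) * x'' t) (hx''c.intervalIntegrable _ _)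
        (((continuous_const.mul hcosC).mul hx''c).intervalIntegrable _ _)] at hL
    have e1 : (∫ t in (0:ℝ)..(2*Real.pi), (e:ℂ) * ((Real.cos t : ℝ) : ℂ) * x'' t)
        = (e:ℂ) * ∫ t in (0:ℝ)..(2*Real.pi), ((Real.cos t : ℝ) : ℂ) * x'' t := by
      rw [← intervalIntegral.integral_const_mul]
      exact intervalIntegral.integral_congr fun t _ => by ring
    have e2 : (∫ t in (0:ℝ)..(2*Real.pi), (e:ℂ) * ((Real.cos t : ℝ) : ℂ) * x t)
        = (e:ℂ) * ∫ t in (0:ℝ)..(2*Real.pi), ((Real.cos t : ℝ) : ℂ) * x t := by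
      rw [← intervalIntegral.integral_const_mul]
      exact intervalIntegral.integral_congr fun t _ => by ring
    have e3 : (∫ t in (0:ℝ)..(2*Real.pi), (1/2 : ℂ) * x t)
        = (1/2 : ℂ) * ∫ t in (0:ℝ)..(2*Real.pi), x t :=
      intervalIntegral.integral_const_mul _ _
    rw [e1, e2, e3, hIx'', hIcosx''] at hL
    have h2 : ((1:ℂ)/2) ≠ 0 := by norm_num
    field_simp at hL
    rw [← hL]
    ring
  -- Fourier coefficients
  obtain ⟨hsc, hpc⟩ := parseval_aux x hxc hxp0
  obtain ⟨hsd, hpd⟩ := parseval_aux x' hx'c hx'p0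
  have hc0 : fourierCoeffOn two_pi_pos' x 0 = 0 := by
    rw [fourierCoeffOn_eq_integral]
    simp [hmean]
  have hd0 : fourierCoeffOn two_pi_pos' x' 0 = 0 := by
    rw [fourierCoeffOn_eq_integral]
    simp [hIx']
  have hrel : ∀ n : ℤ, n ≠ 0 →
      fourierCoeffOn two_pi_pos' x' n = Complex.I * n * fourierCoeffOn two_pi_pos' x n := by
    intro n hn
    have h := fourierCoeffOn_of_hasDerivAt two_pi_pos' hn (fun t _ => hd1 t)
      (hx'c.intervalIntegrable _ _)
    rw [← hxp0, sub_self, mul_zero, zero_sub] at h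
    have hπC : ((Real.pi : ℝ) : ℂ) ≠ 0 := Complex.ofReal_ne_zero.mpr Real.pi_ne_zero
    have hnC : ((n : ℤ) : ℂ) ≠ 0 := Int.cast_ne_zero.mpr hn
    have hIC : Complex.I ≠ 0 := Complex.I_ne_zero
    field_simp at h
    refine mul_left_cancel₀ (show (2*(Real.pi:ℂ)) ≠ 0 by simp [hπC]) ?_
    push_cast at h
    linear_combination -h
  have hterm : ∀ n : ℤ, ‖fourierCoeffOn two_pi_pos' x n‖ ^ 2
      ≤ ‖fourierCoeffOn two_pi_pos' x' n‖ ^ 2 := by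
    intro n
    rcases eq_or_ne n 0 with h | h
    · simp [h, hc0, hd0]
    · rw [hrel n h]
      have h1 : (1:ℝ) ≤ |(n:ℝ)| := by
        rw [← Int.cast_abs]
        exact_mod_cast Int.one_le_abs h
      rw [norm_mul, norm_mul, Complex.norm_I, one_mul, Complex.norm_intCast]
      have hnn := norm_nonneg (fourierCoeffOn two_pi_pos' x n)
      rw [mul_pow]
      have h2 : (1:ℝ) ≤ |(n:ℝ)| ^ 2 := by nlinarith
      nlinarith [sq_nonneg (‖fourierCoeffOn two_pi_pos' x n‖)]
  have hI1I2 : (∫ t in (0:ℝ)..(2*Real.pi), ‖x t‖ ^ 2)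
      ≤ ∫ t in (0:ℝ)..(2*Real.pi), ‖x' t‖ ^ 2 := by
    rw [← hpc, ← hpd]
    exact mul_le_mul_of_nonneg_left (Summable.tsum_le_tsum hterm hsc hsd) hπ.le
  -- integration by parts for the pairing
  have hconjd : ∀ t : ℝ, HasDerivAt (fun s => conj (x s)) (conj (x' t)) t := fun t => (hd1 t).star
  have hconjc : Continuous fun t => conj (x t) := Complex.continuous_conj.comp hxc
  have hconjc' : Continuous fun t => conj (x' t) := Complex.continuous_conj.comp hx'c
  have hIBP : (∫ t in (0:ℝ)..(2*Real.pi), conj (x t) * x'' t)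
      = - ∫ t in (0:ℝ)..(2*Real.pi), conj (x' t) * x' t := by
    rw [intervalIntegral.integral_mul_deriv_eq_deriv_mul
      (u := fun t => conj (x t)) (u' := fun t => conj (x' t)) (v := x') (v' := x'')
      (fun t _ => hconjd t) (fun t _ => hd2 t)
      (hconjc'.intervalIntegrable _ _) (hx''c.intervalIntegrable _ _)]
    rw [← hxp0, ← hx'p0]
    ring
  have hcc : ∀ z : ℂ, conj z * z = ((‖z‖^2 : ℝ) : ℂ) := fun z => by
    simp [Complex.conj_mul', Complex.normSq_eq_norm_sq]
  set g3 : ℝ → ℝ := fun t => 3 / (2*(1+e*Real.cos t)) * ‖x t‖^2 with hg3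
  have hptwise : ∀ t : ℝ, conj (x t) * (-x'' t - x t + 3 * x t / (2 * (1 + e * Real.cos t)))
      = -(conj (x t) * x'' t) - ((‖x t‖^2 : ℝ) : ℂ) + ((g3 t : ℝ) : ℂ) := by
    intro t
    have h1 := hcc (x t)
    have hw : ((3 / (2*(1+e*Real.cos t)) : ℝ) : ℂ) = 3 / (2 * (1 + (e:ℂ) * ((Real.cos t : ℝ) : ℂ))) := by
      push_cast
      ring
    have hg : ((g3 t : ℝ) : ℂ)
        = 3 / (2 * (1 + (e:ℂ) * ((Real.cos t : ℝ) : ℂ))) * (conj (x t) * x t) := by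
      rw [hg3]
      simp only
      rw [Complex.ofReal_mul, hw, h1]
    rw [hg, ← h1]
    ring
  have h0 : (∫ t in (0:ℝ)..(2*Real.pi),
      (-(conj (x t) * x'' t) - ((‖x t‖^2 : ℝ) : ℂ) + ((g3 t : ℝ) : ℂ))) = 0 := by
    rw [← intervalIntegral.integral_congr (fun t _ => hptwise t)]
    rw [intervalIntegral.integral_congr (g := fun _ => (0:ℂ)) (fun t _ => hzero t)]
    simp
  have hg3cont : Continuous g3 := by
    apply Continuous.mul _ (hxc.norm.pow 2)
    exact continuous_const.div
      (continuous_const.mul (continuous_const.add (continuous_const.mul Real.continuous_cos)))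
      (fun t => by nlinarith [hwpos t])
  have hf1 : IntervalIntegrable (fun t => conj (x t) * x'' t) volume 0 (2*Real.pi) :=
    (hconjc.mul hx''c).intervalIntegrable _ _
  have hf2 : IntervalIntegrable (fun t => ((‖x t‖^2 : ℝ) : ℂ)) volume 0 (2*Real.pi) :=
    (Complex.continuous_ofReal.comp (hxc.norm.pow 2)).intervalIntegrable _ _
  have hf3 : IntervalIntegrable (fun t => ((g3 t : ℝ) : ℂ)) volume 0 (2*Real.pi) :=
    (Complex.continuous_ofReal.comp hg3cont).intervalIntegrable _ _
  have hf1n : IntervalIntegrable (fun t => -((starRingEnd ℂ) (x t) * x'' t)) volume 0 (2*Real.pi) :=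
    ((hconjc.mul hx''c).neg).intervalIntegrable _ _
  have hf12 : IntervalIntegrable
      (fun t => -((starRingEnd ℂ) (x t) * x'' t) - ((‖x t‖^2 : ℝ) : ℂ)) volume 0 (2*Real.pi) :=
    (((hconjc.mul hx''c).neg).sub (Complex.continuous_ofReal.comp (hxc.norm.pow 2))).intervalIntegrable _ _
  rw [intervalIntegral.integral_add hf12 hf3,
    intervalIntegral.integral_sub hf1n hf2, intervalIntegral.integral_neg, hIBP, neg_neg] at h0
  have e4 : (∫ t in (0:ℝ)..(2*Real.pi), conj (x' t) * x' t)
      = (((∫ t in (0:ℝ)..(2*Real.pi), ‖x' t‖^2) : ℝ) : ℂ) := by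
    rw [intervalIntegral.integral_congr (fun t _ => hcc (x' t))]
    exact intervalIntegral.integral_ofReal
  have e5 : (∫ t in (0:ℝ)..(2*Real.pi), ((‖x t‖^2 : ℝ) : ℂ))
      = (((∫ t in (0:ℝ)..(2*Real.pi), ‖x t‖^2) : ℝ) : ℂ) := intervalIntegral.integral_ofReal
  have e6 : (∫ t in (0:ℝ)..(2*Real.pi), ((g3 t : ℝ) : ℂ))
      = (((∫ t in (0:ℝ)..(2*Real.pi), g3 t) : ℝ) : ℂ) := intervalIntegral.integral_ofReal
  rw [e4, e5, e6] at h0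
  have hsplit : (∫ t in (0:ℝ)..(2*Real.pi), ‖x' t‖^2) - (∫ t in (0:ℝ)..(2*Real.pi), ‖x t‖^2)
      + (∫ t in (0:ℝ)..(2*Real.pi), g3 t) = 0 := by exact_mod_cast h0
  -- the weighted integral vanishes
  have hI3nonneg : 0 ≤ ∫ t in (0:ℝ)..(2*Real.pi), g3 t := by
    apply intervalIntegral.integral_nonneg hπ.le
    intro t _
    exact mul_nonneg (div_nonneg (by norm_num) (by nlinarith [hwpos t])) (by positivity)
  have hI3 : (∫ t in (0:ℝ)..(2*Real.pi), g3 t) = 0 := le_antisymm (by linarith) hI3nonneg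
  have hc0pos : (0:ℝ) < 3 / (2*(1+e)) := by positivity
  have hm : (3 / (2*(1+e))) * ∫ t in (0:ℝ)..(2*Real.pi), ‖x t‖^2
      ≤ ∫ t in (0:ℝ)..(2*Real.pi), g3 t := by
    rw [← intervalIntegral.integral_const_mul]
    apply intervalIntegral.integral_mono_on hπ.le
      ((continuous_const.mul (hxc.norm.pow 2)).intervalIntegrable _ _)
      (hg3cont.intervalIntegrable _ _)
    intro t _
    apply mul_le_mul_of_nonneg_right _ (by positivity : (0:ℝ) ≤ ‖x t‖^2)
    apply div_le_div_of_nonneg_left (by norm_num) (by nlinarith [hwpos t])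
      (by nlinarith [Real.cos_le_one t])
  have hI1nonneg : 0 ≤ ∫ t in (0:ℝ)..(2*Real.pi), ‖x t‖^2 :=
    intervalIntegral.integral_nonneg hπ.le (fun t _ => by positivity)
  have hI1 : (∫ t in (0:ℝ)..(2*Real.pi), ‖x t‖^2) = 0 := by nlinarith
  -- conclude x = 0 on (0, 2π]
  have hIoc : ∀ t ∈ Set.Ioc (0:ℝ) (2*Real.pi), x t = 0 := by
    have hset : (∫ t in Set.Ioc (0:ℝ) (2*Real.pi), ‖x t‖^2) = 0 := by
      rw [← intervalIntegral.integral_of_le hπ.le]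
      exact hI1
    have hint : MeasureTheory.IntegrableOn (fun t => ‖x t‖^2) (Set.Ioc 0 (2*Real.pi)) :=
      (hxc.norm.pow 2).integrableOn_Ioc
    have hae := (MeasureTheory.integral_eq_zero_iff_of_nonneg (fun t => by positivity) hint).mp hset
    have heon : Set.EqOn (fun t => ‖x t‖^2) 0 (Set.Ioc 0 (2*Real.pi)) := by
      apply MeasureTheory.Measure.eqOn_of_ae_eq hae (hxc.norm.pow 2).continuousOn continuousOn_const
      rw [interior_Ioc, closure_Ioo hπ.ne]
      exact Set.Ioc_subset_Icc_self
    intro t ht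
    have h := heon ht
    have h2 : ‖x t‖ = 0 := by
      have := sq_eq_zero_iff.mp h
      simpa using this
    exact norm_eq_zero.mp h2
  intro t
  have p : Function.Periodic x (2*Real.pi) := hper
  have hs := p.sub_int_mul_eq (x := t) ⌊t / (2*Real.pi)⌋
  set s := t - (⌊t / (2*Real.pi)⌋ : ℤ) * (2*Real.pi) with hsdef
  have hfl := Int.floor_le (t / (2*Real.pi))
  have hfl2 := Int.lt_floor_add_one (t / (2*Real.pi))
  have hs0 : 0 ≤ s := by
    rw [hsdef]
    have : (⌊t / (2*Real.pi)⌋ : ℝ) * (2*Real.pi) ≤ t := by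
      rw [← le_div_iff₀ hπ] at *
      nlinarith
    linarith
  have hs1 : s < 2*Real.pi := by
    rw [hsdef]
    have : t < ((⌊t / (2*Real.pi)⌋ : ℝ) + 1) * (2*Real.pi) := by
      rw [← div_lt_iff₀ hπ] at *
      nlinarith
    nlinarith
  rw [← hs]
  rcases eq_or_lt_of_le hs0 with h | h
  · rw [← h, hxp0]
    exact hIoc _ ⟨hπ, le_refl _⟩
  · exact hIoc s ⟨h, hs1.le⟩
end
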